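/- arXiv:2507.21737 — 8 statements merged into one kernel-verified Lean document; each statement's English description precedes it below -/
import Mathlib

section
/- Let F be a field with automorphisms s, g satisfying s² = g³ = (sg)² = id. Let τ, λ ∈ F* and set τ' = τ · s(λ) · (s∘g)(λ) · λ⁻¹. If ξ = τ·s(τ)·(s∘g)(τ) and ξ' = τ'·s(τ')·(s∘g)(τ'), then ξ' = ξ · λ · g(λ) · g²(λ). -/
/-!
The map `N τ = τ · s τ · (s∘g) τ` is multiplicative, so `N τ' = N τ · N μ` with
`μ = s λ · (s∘g) λ · λ⁻¹`. Applying `s` and `s∘g` to `μ` and using `s² = 1`, `sgs = g²`,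
`(sg)² = 1`, the nine factors of `N μ` regroup as `λ · g λ · g² λ` times three
quotients `x / x` with `x = s λ`, `(s∘g) λ`, `λ`.
-/

namespace TwistedNorm

theorem s_g_s_apply_eq_g_g {α : Type*} {s g : α → α} (hg : ∀ x, g (g (g x)) = x)
    (hsg : ∀ x, s (g (s (g x))) = x) (x : α) : s (g (s x)) = g (g x) := by
  simpa only [hg] using hsg (g (g x))

variable {F E : Type*} [CommGroupWithZero F] [EquivLike E F F] [MulEquivClass E F F] (s g : E)

def twistedNorm (x : F) : F := x * s x * s (g x)

theorem twistedNorm_mul (x y : F) :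
    twistedNorm s g (x * y) = twistedNorm s g x * twistedNorm s g y := by
  simp only [twistedNorm, map_mul]
  ac_rfl

variable {s g}

theorem twistedNorm_coboundary (hs : ∀ x, s (s x) = x) (hg : ∀ x, g (g (g x)) = x)
    (hsg : ∀ x, s (g (s (g x))) = x) {l : F} (hl : l ≠ 0) :
    twistedNorm s g (s l * s (g l) * l⁻¹) = l * g l * g (g l) := by
  have hsl : s l ≠ 0 := (map_ne_zero s).mpr hl
  have hsgl : s (g l) ≠ 0 := (map_ne_zero s).mpr ((map_ne_zero g).mpr hl)
  simp only [twistedNorm, map_mul, map_inv₀, hs, hsg, s_g_s_apply_eq_g_g hg hsg]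
  calc s l * s (g l) * l⁻¹ * (l * g l * (s l)⁻¹) * (g (g l) * l * (s (g l))⁻¹)
      = (s l * (s l)⁻¹) * (s (g l) * (s (g l))⁻¹) * (l * l⁻¹) * (l * g l * g (g l)) := by
        ac_rfl
    _ = l * g l * g (g l) := by
      rw [mul_inv_cancel₀ hsl, mul_inv_cancel₀ hsgl, mul_inv_cancel₀ hl, one_mul, one_mul, one_mul]

end TwistedNorm

open TwistedNorm in
theorem stmt_2_general {F : Type*} [Field F] (s g : F ≃+* F)
    (hs : ∀ x, s (s x) = x) (hg : ∀ x, g (g (g x)) = x)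
    (hsg : ∀ x, s (g (s (g x))) = x)
    (τ l : F) (hl : l ≠ 0)
    (τ' : F) (hτ' : τ' = τ * s l * s (g l) * l⁻¹)
    (ξ : F) (hξ : ξ = τ * s τ * s (g τ))
    (ξ' : F) (hξ' : ξ' = τ' * s τ' * s (g τ')) :
    ξ' = ξ * (l * g l * g (g l)) := by
  have hτ'_split : τ' = τ * (s l * s (g l) * l⁻¹) := by rw [hτ']; ring
  calc ξ' = twistedNorm s g τ' := hξ'
    _ = twistedNorm s g τ * twistedNorm s g (s l * s (g l) * l⁻¹) := by
      rw [hτ'_split, twistedNorm_mul]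
    _ = ξ * (l * g l * g (g l)) := by
      rw [twistedNorm_coboundary hs hg hsg hl, hξ, twistedNorm]

/-- If `τ' = τ·s(λ)·(s∘g)(λ)·λ⁻¹`, `ξ = τ·s(τ)·(s∘g)(τ)` and `ξ' = τ'·s(τ')·(s∘g)(τ')`,
then `ξ' = ξ·Norm_g(λ)`. -/
theorem stmt_2 {F : Type*} [Field F] (s g : F ≃+* F)
    (hs : ∀ x, s (s x) = x) (hg : ∀ x, g (g (g x)) = x)
    (hsg : ∀ x, s (g (s (g x))) = x)
    (τ l : F) (hτ : τ ≠ 0) (hl : l ≠ 0)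
    (τ' : F) (hτ' : τ' = τ * s l * s (g l) * l⁻¹)
    (ξ : F) (hξ : ξ = τ * s τ * s (g τ))
    (ξ' : F) (hξ' : ξ' = τ' * s τ' * s (g τ')) :
    ξ' = ξ * (l * g l * g (g l)) :=
  stmt_2_general s g hs hg hsg τ l hl τ' hτ' ξ hξ ξ' hξ'
end

section
/- Let F be a field with an automorphism g of order 3, and let ξ, ξ' ∈ F* be fixed by g. Let R_ξ denote the 3×3 matrix with entries R_ξ[1,3] = ξ, R_ξ[2,1] = 1, R_ξ[3,2] = 1 and all other entries 0 (and similarly R_{ξ'}). Suppose A ∈ GL₃(F) and a ∈ F* satisfy a·R_ξ = A⁻¹ · R_{ξ'} · g(A), where g(A) means applying g to every entry of A. Then ξ'/ξ = a · g(a) · g²(a). -/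
/-!
Applying `g` to the relation `A (a R_ξ) = R_{ξ'} g(A)` and chaining the three conjugates gives
`a g(a) g²(a) · A R_ξ³ = R_{ξ'}³ g³(A)`. Since `R_x³ = x · 1` and `g³ = id`, this reads
`a g(a) g²(a) ξ · A = ξ' · A`, and `A ≠ 0` lets us cancel it.
-/

open Finset

section TwistedConjugacy

variable {R : Type*} [CommSemiring R] {n : Type*} [Fintype n] [DecidableEq n]

theorem Matrix.prod_iterate_smul_mul_pow_eq (f : R →+* R) {P Q A : Matrix n n R} {c : R}
    (hP : P.map f = P) (hQ : Q.map f = Q) (h : A * (c • P) = Q * A.map f) (k : ℕ) :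
    (∏ i ∈ range k, (⇑f)^[i] c) • (A * P ^ k) = Q ^ k * A.map (⇑f)^[k] := by
  induction k generalizing A c with
  | zero => simp
  | succ k ih =>
    have hf : A.map f * (f c • P) = Q * (A.map f).map f := by
      rw [← hP, ← Matrix.map_smul' f c P (map_mul f), ← Matrix.map_mul, h, Matrix.map_mul, hQ]
    calc (∏ i ∈ range (k + 1), (⇑f)^[i] c) • (A * P ^ (k + 1))
        = A * (c • P) * ((∏ i ∈ range k, (⇑f)^[i] (f c)) • P ^ k) := by
          simp only [prod_range_succ', Function.iterate_succ_apply, Function.iterate_zero_apply,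
            pow_succ', Matrix.mul_smul, Matrix.smul_mul, smul_smul, Matrix.mul_assoc]
      _ = Q * (∏ i ∈ range k, (⇑f)^[i] (f c)) • (A.map f * P ^ k) := by
          rw [h, Matrix.mul_assoc, Matrix.mul_smul, Matrix.mul_smul]
      _ = Q ^ (k + 1) * A.map (⇑f)^[k + 1] := by
          rw [ih hf, pow_succ', Matrix.mul_assoc, Matrix.map_map, ← Function.iterate_succ]

end TwistedConjugacy

section ShiftMatrix

variable {R : Type*} [Semiring R]

theorem Matrix.map_shift_three {S : Type*} [Semiring S] (f : R →+* S) (x : R) :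
    (!![0, 0, x; 1, 0, 0; 0, 1, 0] : Matrix (Fin 3) (Fin 3) R).map f
      = !![0, 0, f x; 1, 0, 0; 0, 1, 0] := by
  ext i j
  fin_cases i <;> fin_cases j <;> simp

theorem Matrix.shift_three_pow_three (x : R) :
    (!![0, 0, x; 1, 0, 0; 0, 1, 0] : Matrix (Fin 3) (Fin 3) R) ^ 3 = x • 1 := by
  ext i j
  fin_cases i <;> fin_cases j <;> simp [pow_succ, Matrix.mul_apply, Fin.sum_univ_succ]

end ShiftMatrix

theorem stmt_5_general {F : Type*} [Field F] (g : F ≃+* F)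
    (hg : ∀ x, g (g (g x)) = x)
    (ξ ξ' : F) (hξ : ξ ≠ 0) (hgξ : g ξ = ξ) (hgξ' : g ξ' = ξ')
    (A : Matrix (Fin 3) (Fin 3) F) (hA : IsUnit A.det)
    (a : F)
    (hrel : a • (!![0, 0, ξ; 1, 0, 0; 0, 1, 0] : Matrix (Fin 3) (Fin 3) F)
        = A⁻¹ * (!![0, 0, ξ'; 1, 0, 0; 0, 1, 0] : Matrix (Fin 3) (Fin 3) F) * A.map ⇑g) :
    ξ' / ξ = a * g a * g (g a) := by
  have hconj : A * (a • !![0, 0, ξ; 1, 0, 0; 0, 1, 0])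
      = !![0, 0, ξ'; 1, 0, 0; 0, 1, 0] * A.map g := by
    rw [hrel, ← Matrix.mul_assoc, ← Matrix.mul_assoc, A.mul_nonsing_inv hA, Matrix.one_mul]
  have hiter := Matrix.prod_iterate_smul_mul_pow_eq (g : F →+* F)
    (by simpa [hgξ] using Matrix.map_shift_three (g : F →+* F) ξ)
    (by simpa [hgξ'] using Matrix.map_shift_three (g : F →+* F) ξ') hconj 3
  have hscalar : (a * g a * g (g a) * ξ) • A = ξ' • A := by
    simpa [Matrix.shift_three_pow_three, prod_range_succ, smul_smul, Function.comp_def, hg]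
      using hiter
  have hA0 : A ≠ 0 := fun h0 => by simp [h0] at hA
  rw [div_eq_iff hξ, ← smul_left_injective F hA0 hscalar]

/-- If `a·R_ξ = A⁻¹·R_{ξ'}·g(A)` with `A` invertible and `ξ, ξ'` fixed by `g` (of order 3),
then `ξ'/ξ = a·g(a)·g²(a)`. -/
theorem stmt_5 {F : Type*} [Field F] (g : F ≃+* F)
    (hg : ∀ x, g (g (g x)) = x)
    (ξ ξ' : F) (hξ : ξ ≠ 0) (hξ' : ξ' ≠ 0) (hgξ : g ξ = ξ) (hgξ' : g ξ' = ξ')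
    (A : Matrix (Fin 3) (Fin 3) F) (hA : IsUnit A.det)
    (a : F) (ha : a ≠ 0)
    (hrel : a • (!![0, 0, ξ; 1, 0, 0; 0, 1, 0] : Matrix (Fin 3) (Fin 3) F)
        = A⁻¹ * (!![0, 0, ξ'; 1, 0, 0; 0, 1, 0] : Matrix (Fin 3) (Fin 3) F) * A.map ⇑g) :
    ξ' / ξ = a * g a * g (g a) :=
  stmt_5_general g hg ξ ξ' hξ hgξ hgξ' A hA a hrel
end

section
/- Let F be a field with automorphisms s, g satisfying s² = g³ = (sg)² = id, and let τ, ξ ∈ F*. Then the pair of conditions [τ·ξ = s(ξ)·(s∘g²)(τ) and s(ξ) = s(τ)·τ·g(τ)] holds if and only if the pair of conditions [ξ = τ·s(τ)·(s∘g)(τ) and g(ξ) = ξ] holds. -/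
/-!
Put `η = τ·s(τ)·(s∘g)(τ)`. Since `s` is an involution, `s(η) = s(τ)·τ·g(τ)`, so on either side
of the equivalence one condition says `ξ = η`. The dihedral relations give `g∘s∘g = s` and
`g∘s = s∘g²`, whence `τ·g(η) = s(η)·(s∘g²)(τ)`; for `ξ = η` the remaining condition
`τ·ξ = s(ξ)·(s∘g²)(τ)` therefore reads `τ·ξ = τ·g(ξ)`, i.e. `g(ξ) = ξ`.
-/

section DihedralRelations

variable {α : Type*} {s g : α → α}

theorem g_s_g_eq_s (hs : ∀ x, s (s x) = x) (hsg : ∀ x, s (g (s (g x))) = x) (x : α) :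
    g (s (g x)) = s x := by
  simpa only [hs] using congrArg s (hsg x)

theorem g_s_eq_s_g_g (hs : ∀ x, s (s x) = x) (hg : ∀ x, g (g (g x)) = x)
    (hsg : ∀ x, s (g (s (g x))) = x) (x : α) : g (s x) = s (g (g x)) := by
  conv_lhs => rw [← hg x, g_s_g_eq_s hs hsg]

end DihedralRelations

section Multiplicative

variable {M E : Type*} [CommSemigroup M] [FunLike E M M] [MulHomClass E M M] {s g : E}

theorem map_mul_map_mul_map_map_of_involutive (hs : ∀ x, s (s x) = x) (τ : M) :
    s (τ * s τ * s (g τ)) = s τ * τ * g τ := by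
  rw [map_mul, map_mul, hs, hs]

theorem mul_map_eq_map_mul_map_map_of_dihedral (hs : ∀ x, s (s x) = x)
    (hg : ∀ x, g (g (g x)) = x) (hsg : ∀ x, s (g (s (g x))) = x) (τ : M) :
    τ * g (τ * s τ * s (g τ)) = s (τ * s τ * s (g τ)) * s (g (g τ)) := by
  rw [map_mul_map_mul_map_map_of_involutive hs, map_mul, map_mul, g_s_eq_s_g_g hs hg hsg,
    g_s_g_eq_s hs hsg]
  ac_rfl

end Multiplicative

theorem stmt_6_general {F : Type*} [Field F] (s g : F ≃+* F)
    (hs : ∀ x, s (s x) = x) (hg : ∀ x, g (g (g x)) = x)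
    (hsg : ∀ x, s (g (s (g x))) = x)
    (τ ξ : F) (hτ : τ ≠ 0) :
    (τ * ξ = s ξ * s (g (g τ)) ∧ s ξ = s τ * τ * g τ) ↔
      (ξ = τ * s τ * s (g τ) ∧ g ξ = ξ) := by
  rw [← map_mul_map_mul_map_map_of_involutive hs, s.injective.eq_iff, and_comm]
  refine and_congr_right fun hξ => ?_
  subst hξ
  rw [← mul_map_eq_map_mul_map_map_of_dihedral hs hg hsg, mul_right_inj' hτ, eq_comm]

/-- The cocycle compatibility: `[τξ = s(ξ)·(s∘g²)(τ) ∧ s(ξ) = s(τ)·τ·g(τ)]` holds iff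
`[ξ = τ·s(τ)·(s∘g)(τ) ∧ g(ξ) = ξ]` holds. -/
theorem stmt_6 {F : Type*} [Field F] (s g : F ≃+* F)
    (hs : ∀ x, s (s x) = x) (hg : ∀ x, g (g (g x)) = x)
    (hsg : ∀ x, s (g (s (g x))) = x)
    (τ ξ : F) (hτ : τ ≠ 0) (hξ : ξ ≠ 0) :
    (τ * ξ = s ξ * s (g (g τ)) ∧ s ξ = s τ * τ * g τ) ↔
      (ξ = τ * s τ * s (g τ) ∧ g ξ = ξ) :=
  stmt_6_general s g hs hg hsg τ ξ hτ
end

section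
/- Let L be a field with an automorphism h of order 2, and let δ, δ' ∈ L* be fixed by h. Set α = [[0, δ],[1, 0]] and α' = [[0, δ'],[1, 0]] in GL₂(L). If there exist β ∈ GL₂(L) and λ ∈ L* with λ·α = β · α' · h(β⁻¹) (h applied entrywise), then δ' = λ·h(λ)·δ. -/
/-!
Apply `h` entrywise to `λα = β α' h(β⁻¹)` and multiply the two relations: since `h` is an
involution, the middle factors `h(β⁻¹) h(β)` cancel, so `(λα)·h(λα) = β (α' α') β⁻¹`.
Both `α` and `α'` are fixed by `h` and square to scalars, so the left side is `λ h(λ) δ` and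
the right side is `δ'`.
-/

open Matrix

theorem mul_map_twistedConj {M : Type*} [Monoid M] (σ : M →* M) (hσ : ∀ x, σ (σ x) = x)
    {b b' : M} (hb : b' * b = 1) (y : M) :
    b * y * σ b' * σ (b * y * σ b') = b * (y * σ y) * b' := by
  have hcancel : σ b' * σ b = 1 := by rw [← map_mul, hb, map_one]
  calc b * y * σ b' * σ (b * y * σ b')
      = b * y * (σ b' * σ b) * σ y * b' := by simp only [map_mul, hσ, mul_assoc]
    _ = b * (y * σ y) * b' := by rw [hcancel, mul_one, mul_assoc b]

theorem antidiag_mul_self {R : Type*} [Semiring R] (a : R) :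
    !![0, a; 1, 0] * !![0, a; 1, 0] = a • (1 : Matrix (Fin 2) (Fin 2) R) := by
  ext i j; fin_cases i <;> fin_cases j <;> simp

theorem mapMatrix_smul_antidiag {R : Type*} [Semiring R] (f : R →+* R) (c : R) {a : R}
    (ha : f a = a) :
    f.mapMatrix (c • !![0, a; 1, 0]) = f c • !![0, a; 1, 0] := by
  ext i j; fin_cases i <;> fin_cases j <;> simp [ha]

theorem mapMatrix_antidiag {R : Type*} [Semiring R] (f : R →+* R) {a : R} (ha : f a = a) :
    f.mapMatrix !![0, a; 1, 0] = !![0, a; 1, 0] := by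
  simpa using mapMatrix_smul_antidiag f 1 ha

theorem mapMatrix_mapMatrix_of_involutive {R : Type*} [Semiring R] {n : Type*} [Fintype n]
    [DecidableEq n] (h : R →+* R) (hh : ∀ x, h (h x) = x) (M : Matrix n n R) :
    h.mapMatrix (h.mapMatrix M) = M := by
  ext i j; simp [hh]

theorem smul_one_injective {R : Type*} [Semiring R] {n : Type*} [DecidableEq n] [Nonempty n]
    {a b : R} (hab : a • (1 : Matrix n n R) = b • 1) : a = b := by
  inhabit n
  simpa using congr_fun₂ hab default default

theorem stmt_8_general {L : Type*} [Field L] (h : L ≃+* L) (hh : ∀ x, h (h x) = x)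
    (δ δ' : L) (hfδ : h δ = δ) (hfδ' : h δ' = δ')
    (β : Matrix (Fin 2) (Fin 2) L) (hβ : IsUnit β.det)
    (l : L)
    (hrel : l • (!![0, δ; 1, 0] : Matrix (Fin 2) (Fin 2) L)
        = β * (!![0, δ'; 1, 0] : Matrix (Fin 2) (Fin 2) L) * (β⁻¹).map ⇑h) :
    δ' = l * h l * δ := by
  set σ := (h : L →+* L).mapMatrix (m := Fin 2)
  have hσ : ∀ M, σ (σ M) = M := mapMatrix_mapMatrix_of_involutive _ hh
  have norm_lhs : l • !![0, δ; 1, 0] * σ (l • !![0, δ; 1, 0]) = (l * h l * δ) • 1 := by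
    rw [mapMatrix_smul_antidiag _ _ hfδ, smul_mul_smul, antidiag_mul_self, smul_smul,
      RingEquiv.coe_toRingHom]
  have norm_rhs : l • !![0, δ; 1, 0] * σ (l • !![0, δ; 1, 0]) = δ' • 1 := by
    rw [hrel]
    refine (mul_map_twistedConj (σ : _ →* _) hσ (nonsing_inv_mul β hβ) _).trans ?_
    rw [MonoidHom.coe_coe, mapMatrix_antidiag _ hfδ', antidiag_mul_self, Matrix.mul_smul,
      mul_one, smul_mul, mul_nonsing_inv β hβ]
  exact smul_one_injective (norm_rhs.symm.trans norm_lhs)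

/-- If `λ·α = β·α'·h(β⁻¹)` for some invertible `β` and `λ ∈ L*`, where `α, α'` are the
standard antidiagonal matrices attached to `δ, δ'` fixed by the order-2 automorphism `h`,
then `δ' = λ·h(λ)·δ`. -/
theorem stmt_8 {L : Type*} [Field L] (h : L ≃+* L) (hh : ∀ x, h (h x) = x)
    (δ δ' : L) (hδ : δ ≠ 0) (hδ'0 : δ' ≠ 0) (hfδ : h δ = δ) (hfδ' : h δ' = δ')
    (β : Matrix (Fin 2) (Fin 2) L) (hβ : IsUnit β.det)
    (l : L) (hl : l ≠ 0)
    (hrel : l • (!![0, δ; 1, 0] : Matrix (Fin 2) (Fin 2) L)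
        = β * (!![0, δ'; 1, 0] : Matrix (Fin 2) (Fin 2) L) * (β⁻¹).map ⇑h) :
    δ' = l * h l * δ :=
  stmt_8_general h hh δ δ' hfδ hfδ' β hβ l hrel
end

section
/- Let F be a field with automorphisms g and f satisfying g³ = f² = id and fgf = g². Write Norm_g(x) = x·g(x)·g²(x). Suppose μ' ∈ F* is such that Norm_g(μ') is fixed by f. Define μ = Norm_g(μ') · (μ' · f(μ'))⁻¹. Then f(μ) = μ and Norm_g(μ) = Norm_g(μ'). -/
/-!
`Norm_g` is multiplicative, sends a `g`-invariant `a` to `a³`, and commutes with `f`, because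
`f` conjugates `g` to `g²`, which only permutes the three factors. With `N = Norm_g μ'`, which is
`g`-invariant, this gives `Norm_g μ = N³ / (Norm_g μ' · Norm_g (f μ')) = N³ / N² = N`, while
`f μ = μ` follows from `f N = N` and `f² = id`.
-/

namespace RingEquiv

variable {R : Type*} [CommSemiring R]

/-- The paper's `Norm_g`, meaningful when `g` has order three. -/
def norm3 (g : R ≃+* R) : R →*₀ R where
  toFun x := x * g x * g (g x)
  map_zero' := by simp
  map_one' := by simp
  map_mul' x y := by simp only [map_mul]; ring

theorem norm3_apply (g : R ≃+* R) (x : R) : norm3 g x = x * g x * g (g x) := rfl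

theorem norm3_of_map_eq_self {g : R ≃+* R} {a : R} (ha : g a = a) : norm3 g a = a ^ 3 := by
  rw [norm3_apply, ha, ha]; ring

theorem map_norm3_eq_self {g : R ≃+* R} (hg : ∀ x, g (g (g x)) = x) (x : R) :
    g (norm3 g x) = norm3 g x := by
  simp only [norm3_apply, map_mul, hg]; ring

theorem norm3_map_of_comp_eq {g f : R ≃+* R} (hg : ∀ x, g (g (g x)) = x)
    (hgf : ∀ x, g (f x) = f (g (g x))) (x : R) : norm3 g (f x) = f (norm3 g x) := by
  simp only [norm3_apply, hgf, hg, map_mul]; ring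

end RingEquiv

open RingEquiv in
theorem stmt_10_general {F : Type*} [Field F] (g f : F ≃+* F)
    (hg : ∀ x, g (g (g x)) = x) (hf : ∀ x, f (f x) = x)
    (hfgf : ∀ x, f (g (f x)) = g (g x))
    (μ' : F)
    (hfix : f (μ' * g μ' * g (g μ')) = μ' * g μ' * g (g μ'))
    (μ : F) (hμ : μ = (μ' * g μ' * g (g μ')) * (μ' * f μ')⁻¹) :
    f μ = μ ∧ μ * g μ * g (g μ) = μ' * g μ' * g (g μ') := by
  have hgf : ∀ x, g (f x) = f (g (g x)) := fun x => by rw [← hfgf, hf]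
  change f (norm3 g μ') = norm3 g μ' at hfix
  change μ = norm3 g μ' * (μ' * f μ')⁻¹ at hμ
  change f μ = μ ∧ norm3 g μ = norm3 g μ'
  set N := norm3 g μ'
  have hNf : norm3 g (f μ') = N := by rw [norm3_map_of_comp_eq hg hgf, hfix]
  subst hμ
  refine ⟨by rw [map_mul, hfix, map_inv₀, map_mul, hf, mul_comm (f μ')], ?_⟩
  rw [map_mul, map_inv₀, map_mul, norm3_of_map_eq_self (map_norm3_eq_self hg μ'), hNf]
  grind

/-- If `Norm_g(μ')` is fixed by `f`, then `μ = Norm_g(μ')·(μ'·f(μ'))⁻¹` satisfies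
`f(μ) = μ` and `Norm_g(μ) = Norm_g(μ')`. -/
theorem stmt_10 {F : Type*} [Field F] (g f : F ≃+* F)
    (hg : ∀ x, g (g (g x)) = x) (hf : ∀ x, f (f x) = x)
    (hfgf : ∀ x, f (g (f x)) = g (g x))
    (μ' : F) (hμ'0 : μ' ≠ 0)
    (hfix : f (μ' * g μ' * g (g μ')) = μ' * g μ' * g (g μ'))
    (μ : F) (hμ : μ = (μ' * g μ' * g (g μ')) * (μ' * f μ')⁻¹) :
    f μ = μ ∧ μ * g μ * g (g μ) = μ' * g μ' * g (g μ') :=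
  stmt_10_general g f hg hf hfgf μ' hfix μ hμ
end

section
/- Let F be a field with automorphisms g and f satisfying g³ = f² = id and fgf = g². Write Norm_g(x) = x·g(x)·g²(x). Suppose θ ∈ F* is such that Norm_g(θ) is fixed by f. Define θ' = Norm_g(θ) · (θ · (g∘f)(θ))⁻¹. Then (g∘f)(θ') = θ' and Norm_g(θ') = Norm_g(θ). -/
/-!
`Norm_g` is multiplicative, and the relation `fgf = g²` turns `Norm_g ∘ (g ∘ f)` into `f ∘ Norm_g`.
Hence `u = θ · (g∘f)(θ)` has norm `Norm_g(θ) · f(Norm_g θ) = Norm_g(θ)²`, while `Norm_g(θ)` itself,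
being fixed by `g`, has norm `Norm_g(θ)³`; so `θ' = Norm_g(θ) / u` has norm `Norm_g(θ)`. Since `g ∘ f`
is an involution fixing `Norm_g(θ)` and swapping the two factors of `u`, it fixes `θ'`.
-/

section CyclicNorm

variable {M G : Type*} [CommMonoid M] [FunLike G M M]

def cyclicNorm (g : G) (x : M) : M := x * g x * g (g x)

theorem cyclicNorm_of_map_eq {g : G} {c : M} (hc : g c = c) : cyclicNorm g c = c ^ 3 := by
  rw [cyclicNorm, hc, hc, pow_three, mul_assoc]

variable [MonoidHomClass G M M] {g f : G}

theorem cyclicNorm_mul (x y : M) :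
    cyclicNorm g (x * y) = cyclicNorm g x * cyclicNorm g y := by
  simp only [cyclicNorm, map_mul]
  ac_rfl

theorem map_cyclicNorm (hg : ∀ x, g (g (g x)) = x) (x : M) :
    g (cyclicNorm g x) = cyclicNorm g x := by
  rw [cyclicNorm, map_mul, map_mul, hg]
  exact (mul_rotate _ _ _).symm

theorem cyclicNorm_map_map (hg : ∀ x, g (g (g x)) = x) (hf : ∀ x, f (f x) = x)
    (hfgf : ∀ x, f (g (f x)) = g (g x)) (x : M) :
    cyclicNorm g (g (f x)) = f (cyclicNorm g x) := by
  have hfg : f (g x) = g (g (f x)) := by rw [← hfgf, hf]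
  have hfgg : f (g (g x)) = g (f x) := by
    have h := hfgf (f (g x))
    rwa [hf, hfg, hg] at h
  rw [cyclicNorm, hg, cyclicNorm, map_mul, map_mul, hfg, hfgg]
  ac_rfl

end CyclicNorm

theorem cyclicNorm_inv {M G : Type*} [CommGroupWithZero M] [FunLike G M M]
    [MonoidWithZeroHomClass G M M] (g : G) (x : M) : cyclicNorm g x⁻¹ = (cyclicNorm g x)⁻¹ := by
  simp only [cyclicNorm, map_inv₀, mul_inv]

theorem stmt_11_general {F : Type*} [Field F] (g f : F ≃+* F)
    (hg : ∀ x, g (g (g x)) = x) (hf : ∀ x, f (f x) = x)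
    (hfgf : ∀ x, f (g (f x)) = g (g x))
    (θ : F)
    (hfix : f (θ * g θ * g (g θ)) = θ * g θ * g (g θ))
    (θ' : F) (hθ' : θ' = (θ * g θ * g (g θ)) * (θ * g (f θ))⁻¹) :
    g (f θ') = θ' ∧ θ' * g θ' * g (g θ') = θ * g θ * g (g θ) := by
  change f (cyclicNorm g θ) = cyclicNorm g θ at hfix
  change θ' = cyclicNorm g θ * (θ * g (f θ))⁻¹ at hθ'
  set N := cyclicNorm g θ
  have hgfN : g (f N) = N := by rw [hfix, map_cyclicNorm hg]
  have hgf_involutive : ∀ x, g (f (g (f x))) = x := fun x => by rw [hfgf, hg]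
  refine ⟨?_, ?_⟩
  · rw [hθ', map_mul f, map_inv₀ f, map_mul g, map_inv₀ g, hgfN, map_mul f, map_mul g,
      hgf_involutive, mul_comm (g (f θ))]
  · have hNN : cyclicNorm g N = N ^ 3 := cyclicNorm_of_map_eq (map_cyclicNorm hg θ)
    have hNu : cyclicNorm g (θ * g (f θ)) = N * N := by
      rw [cyclicNorm_mul, cyclicNorm_map_map hg hf hfgf, hfix]
    change cyclicNorm g θ' = N
    rw [hθ', cyclicNorm_mul, cyclicNorm_inv, hNN, hNu]
    grind

/-- If `Norm_g(θ)` is fixed by `f`, then `θ' = Norm_g(θ)·(θ·(g∘f)(θ))⁻¹` satisfies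
`(g∘f)(θ') = θ'` and `Norm_g(θ') = Norm_g(θ)`. -/
theorem stmt_11 {F : Type*} [Field F] (g f : F ≃+* F)
    (hg : ∀ x, g (g (g x)) = x) (hf : ∀ x, f (f x) = x)
    (hfgf : ∀ x, f (g (f x)) = g (g x))
    (θ : F) (hθ : θ ≠ 0)
    (hfix : f (θ * g θ * g (g θ)) = θ * g θ * g (g θ))
    (θ' : F) (hθ' : θ' = (θ * g θ * g (g θ)) * (θ * g (f θ))⁻¹) :
    g (f θ') = θ' ∧ θ' * g θ' * g (g θ') = θ * g θ * g (g θ) :=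
  stmt_11_general g f hg hf hfgf θ hfix θ' hθ'
end

section
/- Let F be a field with commuting automorphisms h and u, each of order 2. Suppose a ∈ F satisfies: a·u(a) is fixed by h, and (a+1)·(u(a)+1) is fixed by h. Then h(a) = a or h(a) = u(a). -/
/-! Since `h` is a ring homomorphism, the two invariance conditions say that the pairs
`{h a, h (u a)}` and `{a, u a}` have the same product and, subtracting, the same sum.
In an integral domain a pair is determined by its sum and product, because `h a` is then
a root of `(X - a) (X - u a)`. -/

theorem eq_or_eq_of_add_eq_add_of_mul_eq_mul {R : Type*} [CommRing R] [NoZeroDivisors R]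
    {x y a b : R} (hsum : x + y = a + b) (hprod : x * y = a * b) : x = a ∨ x = b := by
  have hroot : (x - a) * (x - b) = 0 := by linear_combination x * hsum - hprod
  rcases mul_eq_zero.mp hroot with hxa | hxb
  · exact Or.inl (sub_eq_zero.mp hxa)
  · exact Or.inr (sub_eq_zero.mp hxb)

theorem stmt_13_general {F : Type*} [Field F] (h u : F ≃+* F)
    (a : F)
    (h1 : h (a * u a) = a * u a)
    (h2 : h ((a + 1) * (u a + 1)) = (a + 1) * (u a + 1)) :
    h a = a ∨ h a = u a := by
  have hprod : h a * h (u a) = a * u a := by rw [← map_mul, h1]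
  have hprod_succ : (h a + 1) * (h (u a) + 1) = (a + 1) * (u a + 1) := by
    simpa only [map_mul, map_add, map_one] using h2
  have hsum : h a + h (u a) = a + u a := by linear_combination hprod_succ - hprod
  exact eq_or_eq_of_add_eq_add_of_mul_eq_mul hsum hprod

/-- If commuting involutions `h, u` of a field satisfy that `a·u(a)` and
`(a+1)·(u(a)+1)` are fixed by `h`, then `h(a) = a` or `h(a) = u(a)`. -/
theorem stmt_13 {F : Type*} [Field F] (h u : F ≃+* F)
    (hh : ∀ x, h (h x) = x) (hu : ∀ x, u (u x) = x)
    (hcomm : ∀ x, h (u x) = u (h x))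
    (a : F)
    (h1 : h (a * u a) = a * u a)
    (h2 : h ((a + 1) * (u a + 1)) = (a + 1) * (u a + 1)) :
    h a = a ∨ h a = u a :=
  stmt_13_general h u a h1 h2
end

section
/- Let F = ℂ(t₁, t₂, t₃, s) be the field of rational functions in four variables, and let g be the ℂ-automorphism of F determined by g(t₁) = t₂, g(t₂) = t₃, g(t₃) = t₁, g(s) = s. Then s is not in the image of the norm map Norm_g : F* → F*, Norm_g(x) = x·g(x)·g²(x). That is, there is no rational function x ∈ F* with x·g(x)·g²(x) = s. -/
/-!
Write `x = P / Q` with polynomials `P, Q`. Since `g` acts on polynomials by renaming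
variables, `x · g(x) · g²(x) = s` becomes `P · gP · g²P = s · Q · gQ · g²Q` in the polynomial
ring. The renaming fixes `s`, so it preserves degrees in `s`, and these are additive on products
of nonzero polynomials: the degree in `s` is divisible by `3` on the left and `≡ 1 mod 3` on
the right.
-/

open MvPolynomial

namespace MvPolynomial

variable {σ R : Type*} {f : σ → σ} {i : σ}

section CommSemiring

variable [CommSemiring R]

theorem degreeOf_rename_of_injective_of_apply_eq (hf : f.Injective) (hi : f i = i)
    (p : MvPolynomial σ R) : degreeOf i (rename f p) = degreeOf i p := by
  simpa only [hi] using degreeOf_rename_of_injective (p := p) hf i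

theorem rename_ne_zero (hf : f.Injective) {p : MvPolynomial σ R} (hp : p ≠ 0) :
    rename f p ≠ 0 :=
  (rename_eq_zero_iff_of_injective p hf).not.mpr hp

theorem degreeOf_mul_rename_mul_rename [NoZeroDivisors R] (hf : f.Injective) (hi : f i = i)
    {p : MvPolynomial σ R} (hp : p ≠ 0) :
    degreeOf i (p * rename f p * rename f (rename f p)) = 3 * degreeOf i p := by
  have hp₁ := rename_ne_zero hf hp
  rw [degreeOf_mul_eq (mul_ne_zero hp hp₁) (rename_ne_zero hf hp₁), degreeOf_mul_eq hp hp₁]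
  simp only [degreeOf_rename_of_injective_of_apply_eq hf hi]
  ring

theorem mul_rename_mul_rename_ne_X_mul [Nontrivial R] [NoZeroDivisors R] (hf : f.Injective)
    (hi : f i = i)
    {p q : MvPolynomial σ R} (hp : p ≠ 0) (hq : q ≠ 0) :
    p * rename f p * rename f (rename f p) ≠ X i * (q * rename f q * rename f (rename f q)) := by
  have hq₁ := rename_ne_zero hf hq
  have hNq : q * rename f q * rename f (rename f q) ≠ 0 :=
    mul_ne_zero (mul_ne_zero hq hq₁) (rename_ne_zero hf hq₁)
  intro h
  have hdeg := congrArg (degreeOf i) h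
  rw [degreeOf_mul_rename_mul_rename hf hi hp, degreeOf_mul_eq (X_ne_zero i) hNq,
    degreeOf_mul_rename_mul_rename hf hi hq, degreeOf_X_self] at hdeg
  omega

theorem algebraMap_rename_of_forall_C_X {K G : Type*} [Semiring K]
    [Algebra (MvPolynomial σ R) K] [FunLike G K K] [RingHomClass G K K] (g : G)
    (hC : ∀ z : R, g (algebraMap (MvPolynomial σ R) K (C z))
        = algebraMap (MvPolynomial σ R) K (C z))
    (hX : ∀ j, g (algebraMap (MvPolynomial σ R) K (X j))
        = algebraMap (MvPolynomial σ R) K (X (f j)))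
    (p : MvPolynomial σ R) :
    g (algebraMap (MvPolynomial σ R) K p)
        = algebraMap (MvPolynomial σ R) K (rename f p) := by
  have : (g : K →+* K).comp (algebraMap (MvPolynomial σ R) K)
      = (algebraMap (MvPolynomial σ R) K).comp (rename f).toRingHom :=
    ringHom_ext (by simpa using hC) (by simpa using hX)
  exact RingHom.congr_fun this p

end CommSemiring

theorem mul_apply_mul_apply_apply_ne_algebraMap_X {K G : Type*} [CommRing R] [IsDomain R]
    [Field K] [Algebra (MvPolynomial σ R) K] [IsFractionRing (MvPolynomial σ R) K]
    [FunLike G K K] [RingHomClass G K K] (hf : f.Injective) (hi : f i = i) (g : G)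
    (hg : ∀ p, g (algebraMap (MvPolynomial σ R) K p)
        = algebraMap (MvPolynomial σ R) K (rename f p))
    {x : K} (hx : x ≠ 0) : x * g x * g (g x) ≠ algebraMap (MvPolynomial σ R) K (X i) := by
  obtain ⟨p, q, hq, rfl⟩ := IsFractionRing.div_surjective (A := MvPolynomial σ R) x
  have hq₀ := nonZeroDivisors.ne_zero hq
  have hp₀ : p ≠ 0 := by rintro rfl; simp at hx
  have hinj := IsFractionRing.injective (MvPolynomial σ R) K
  have hNq : algebraMap (MvPolynomial σ R) K (q * rename f q * rename f (rename f q)) ≠ 0 :=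
    (map_ne_zero_iff _ hinj).mpr <| mul_ne_zero (mul_ne_zero hq₀ (rename_ne_zero hf hq₀))
      (rename_ne_zero hf (rename_ne_zero hf hq₀))
  intro h
  simp only [map_div₀, hg] at h
  rw [div_mul_div_comm, div_mul_div_comm, ← map_mul, ← map_mul, ← map_mul, ← map_mul,
    div_eq_iff hNq, ← map_mul] at h
  exact mul_rename_mul_rename_ne_X_mul hf hi hp₀ hq₀ (hinj h)

end MvPolynomial

/-- In `F = ℂ(t₁, t₂, t₃, s)`, for the automorphism `g` cyclically permuting
`t₁, t₂, t₃` and fixing `s` and the constants, the element `s` is not a `g`-norm: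
there is no `x ∈ F*` with `x·g(x)·g²(x) = s`. -/
theorem stmt_14
    (g : FractionRing (MvPolynomial (Fin 4) ℂ) ≃+* FractionRing (MvPolynomial (Fin 4) ℂ))
    (hg0 : g (algebraMap (MvPolynomial (Fin 4) ℂ) (FractionRing (MvPolynomial (Fin 4) ℂ)) (X 0))
        = algebraMap (MvPolynomial (Fin 4) ℂ) (FractionRing (MvPolynomial (Fin 4) ℂ)) (X 1))
    (hg1 : g (algebraMap (MvPolynomial (Fin 4) ℂ) (FractionRing (MvPolynomial (Fin 4) ℂ)) (X 1))
        = algebraMap (MvPolynomial (Fin 4) ℂ) (FractionRing (MvPolynomial (Fin 4) ℂ)) (X 2))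
    (hg2 : g (algebraMap (MvPolynomial (Fin 4) ℂ) (FractionRing (MvPolynomial (Fin 4) ℂ)) (X 2))
        = algebraMap (MvPolynomial (Fin 4) ℂ) (FractionRing (MvPolynomial (Fin 4) ℂ)) (X 0))
    (hgs : g (algebraMap (MvPolynomial (Fin 4) ℂ) (FractionRing (MvPolynomial (Fin 4) ℂ)) (X 3))
        = algebraMap (MvPolynomial (Fin 4) ℂ) (FractionRing (MvPolynomial (Fin 4) ℂ)) (X 3))
    (hgC : ∀ z : ℂ,
        g (algebraMap (MvPolynomial (Fin 4) ℂ) (FractionRing (MvPolynomial (Fin 4) ℂ)) (C z))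
        = algebraMap (MvPolynomial (Fin 4) ℂ) (FractionRing (MvPolynomial (Fin 4) ℂ)) (C z)) :
    ∀ x : FractionRing (MvPolynomial (Fin 4) ℂ), x ≠ 0 →
      x * g x * g (g x)
        ≠ algebraMap (MvPolynomial (Fin 4) ℂ) (FractionRing (MvPolynomial (Fin 4) ℂ)) (X 3) := by
  have hg : ∀ p : MvPolynomial (Fin 4) ℂ, g (algebraMap _ (FractionRing _) p)
      = algebraMap _ (FractionRing _) (rename (![1, 2, 0, 3] : Fin 4 → Fin 4) p) := by
    refine algebraMap_rename_of_forall_C_X g hgC fun j => ?_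
    fin_cases j <;> assumption
  exact fun x hx => mul_apply_mul_apply_apply_ne_algebraMap_X (by decide) rfl g hg hx
end
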